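/- If a continuous nonnegative integrable f : ℝ → ℝ with ‖f‖_{L¹} > 0 maximizes F(f) = (min_{t∈[0,1]} ∫_ℝ f(x)f(x+t) dx)/‖f‖_{L¹}², then max_{x₁∈ℝ} min_{t∈[0,1]} [f(x₁−t)+f(x₁+t)] ≤ min_{x₂∈supp(f)} max_{t∈[0,1]} [f(x₂−t)+f(x₂+t)]. -/

import Mathlib

/-!
Perturb the maximizer `f` to `f + τ h`, where `h` is a probability density concentrated near a
point `x₀`. To first order in `τ`, every autocorrelation `∫ f(x) f(x+t) dx` grows by
`τ (f (x₀ - t) + f (x₀ + t))`, while `(∫ f)²` grows by `2 τ ∫ f`. Writing `N` for the minimal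
autocorrelation over `t ∈ [0, 1]`, maximality of `f` therefore forces
`min_t (f (x₁ - t) + f (x₁ + t)) ≤ 2 N / ∫ f` (adding mass at any `x₁`) and
`2 N / ∫ f ≤ max_t (f (x₂ - t) + f (x₂ + t))` (removing mass near a point `x₂` of the support).
Comparing `f` with the indicator of `[0, 2]` shows `N > 0`, so all the autocorrelations involved
are integrals of integrable functions.
-/

open MeasureTheory Set Filter Topology

noncomputable def autocorr (g : ℝ → ℝ) (t : ℝ) : ℝ := ∫ x, g x * g (x + t)

noncomputable def minAutocorr (g : ℝ → ℝ) : ℝ := sInf (autocorr g '' Icc 0 1)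

def IsAutocorrMaximizer (f : ℝ → ℝ) : Prop :=
  ∀ g : ℝ → ℝ, Integrable g → (∀ x, 0 ≤ g x) →
    minAutocorr g / (∫ x, g x) ^ 2 ≤ minAutocorr f / (∫ x, f x) ^ 2

theorem le_of_eventually_nhdsGT_le_add_mul {a b c : ℝ}
    (h : ∀ᶠ ε in 𝓝[>] (0 : ℝ), a ≤ b + ε * c) : a ≤ b := by
  have hlim : Tendsto (fun ε => b + ε * c) (𝓝[>] 0) (𝓝 b) := by
    have : Tendsto (fun ε => b + ε * c) (𝓝 0) (𝓝 (b + 0 * c)) :=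
      (continuous_const.add (continuous_id.mul continuous_const)).tendsto 0
    simpa using this.mono_left nhdsWithin_le_nhds
  exact ge_of_tendsto hlim h

theorem abs_integral_mul_sub_le {α : Type*} [MeasurableSpace α] {μ : Measure α} {h u : α → ℝ}
    {c δ : ℝ} (hh0 : ∀ x, 0 ≤ h x) (hh : Integrable h μ)
    (hhu : Integrable (fun x => h x * u x) μ) (h1 : ∫ x, h x ∂μ = 1)
    (hu : ∀ x ∈ Function.support h, |u x - c| ≤ δ) :
    |∫ x, h x * u x ∂μ - c| ≤ δ := by
  have hsub : ∫ x, h x * u x ∂μ - c = ∫ x, h x * (u x - c) ∂μ := by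
    simp_rw [mul_sub]
    rw [integral_sub hhu (hh.mul_const c), integral_mul_const, h1, one_mul]
  have hpt : ∀ x, ‖h x * (u x - c)‖ ≤ h x * δ := by
    intro x
    rw [Real.norm_eq_abs, abs_mul, abs_of_nonneg (hh0 x)]
    by_cases hx : h x = 0
    · simp [hx]
    · exact mul_le_mul_of_nonneg_left (hu x hx) (hh0 x)
  calc |∫ x, h x * u x ∂μ - c| ≤ ∫ x, h x * δ ∂μ := by
        rw [hsub]; exact norm_integral_le_of_norm_le (hh.mul_const δ) (ae_of_all _ hpt)
    _ = δ := by rw [integral_mul_const, h1, one_mul]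

theorem exists_density_support_subset {E : Type*} [NormedAddCommGroup E] [NormedSpace ℝ E]
    [FiniteDimensional ℝ E] [MeasurableSpace E] [BorelSpace E] {μ : Measure E}
    [IsLocallyFiniteMeasure μ] [μ.IsOpenPosMeasure] {s : Set E} {y : E} (hs : s ∈ 𝓝 y) :
    ∃ h : E → ℝ, ∃ C : ℝ, (∀ x, 0 ≤ h x) ∧ (∀ x, ‖h x‖ ≤ C) ∧ Integrable h μ ∧
      ∫ x, h x ∂μ = 1 ∧ Function.support h ⊆ s := by
  obtain ⟨ρ, hρ, hball⟩ := Metric.mem_nhds_iff.1 hs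
  let φ : ContDiffBump y := ⟨ρ / 2, ρ, half_pos hρ, half_lt_self hρ⟩
  obtain ⟨C, hC⟩ := φ.continuous_normed.bounded_above_of_compact_support
    (φ.hasCompactSupport_normed (μ := μ))
  exact ⟨φ.normed μ, C, φ.nonneg_normed, hC, φ.integrable_normed, φ.integral_normed,
    φ.support_normed_eq.trans_subset hball⟩

theorem IsCompact.eventually_forall_abs_sub_lt {X Y : Type*} [TopologicalSpace X]
    [TopologicalSpace Y] {F : X → Y → ℝ} {K : Set Y} (hK : IsCompact K)
    (hF : Continuous (Function.uncurry F)) (x₀ : X) {δ : ℝ} (hδ : 0 < δ) :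
    ∀ᶠ y in 𝓝 x₀, ∀ t ∈ K, |F y t - F x₀ t| < δ := by
  obtain ⟨v, hv, hvδ⟩ := hK.mem_uniformity_of_prod (s := univ) hF.continuousOn (mem_univ x₀)
    (Metric.dist_mem_uniformity hδ)
  rw [nhdsWithin_univ] at hv
  filter_upwards [hv] with y hy t ht using hvδ y hy t ht

section autocorr

variable {f g h : ℝ → ℝ}

theorem autocorr_nonneg (hg : ∀ x, 0 ≤ g x) (t : ℝ) : 0 ≤ autocorr g t :=
  integral_nonneg fun x => mul_nonneg (hg x) (hg _)

theorem minAutocorr_le_autocorr (hg : ∀ x, 0 ≤ g x) {t : ℝ} (ht : t ∈ Icc (0 : ℝ) 1) :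
    minAutocorr g ≤ autocorr g t :=
  csInf_le ⟨0, forall_mem_image.2 fun s _ => autocorr_nonneg hg s⟩ (mem_image_of_mem _ ht)

theorem le_minAutocorr {a : ℝ} (h : ∀ t ∈ Icc (0 : ℝ) 1, a ≤ autocorr g t) :
    a ≤ minAutocorr g :=
  le_csInf ((nonempty_Icc.2 zero_le_one).image _) (forall_mem_image.2 h)

theorem autocorr_add_mul {C t : ℝ} (hf : Integrable f) (hh : Integrable h)
    (hC : ∀ x, ‖h x‖ ≤ C) (hft : Integrable fun x => f x * f (x + t)) (τ : ℝ) :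
    autocorr (fun x => f x + τ * h x) t =
      autocorr f t + τ * (∫ y, h y * (f (y - t) + f (y + t))) + τ ^ 2 * autocorr h t := by
  have hm := hh.aestronglyMeasurable
  have i₁ : Integrable fun y => h y * f (y - t) :=
    (hf.comp_sub_right t).bdd_mul hm (ae_of_all _ hC)
  have i₂ : Integrable fun y => h y * f (y + t) :=
    (hf.comp_add_right t).bdd_mul hm (ae_of_all _ hC)
  have i₃ : Integrable fun y => f y * h (y + t) :=
    hf.mul_bdd (hh.comp_add_right t).aestronglyMeasurable (ae_of_all _ fun x => hC (x + t))
  have i₄ : Integrable fun y => h y * h (y + t) :=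
    (hh.comp_add_right t).bdd_mul hm (ae_of_all _ hC)
  have shift : ∫ x, f x * h (x + t) = ∫ y, h y * f (y - t) := by
    rw [← integral_add_right_eq_self (fun y => h y * f (y - t)) t]
    simp [mul_comm]
  have split : ∫ y, h y * (f (y - t) + f (y + t)) =
      (∫ y, h y * f (y - t)) + ∫ y, h y * f (y + t) := by
    rw [← integral_add i₁ i₂]; simp_rw [mul_add]
  have expand : (fun x => (f x + τ * h x) * (f (x + t) + τ * h (x + t))) = fun x =>
      f x * f (x + t) + (τ * (f x * h (x + t)) + τ * (h x * f (x + t))) +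
        τ ^ 2 * (h x * h (x + t)) := by
    ext x; ring
  have i₅ : Integrable fun x => τ * (f x * h (x + t)) + τ * (h x * f (x + t)) :=
    (i₃.const_mul τ).add (i₂.const_mul τ)
  have i₆ : Integrable fun x =>
      f x * f (x + t) + (τ * (f x * h (x + t)) + τ * (h x * f (x + t))) := hft.add i₅
  unfold autocorr
  rw [expand, integral_add i₆ (i₄.const_mul _), integral_add hft i₅,
    integral_add (i₃.const_mul τ) (i₂.const_mul τ), integral_const_mul, integral_const_mul,
    integral_const_mul, shift, split]
  ring

theorem autocorr_add_mul_ge {C x₀ δ t : ℝ} (hf : Integrable f) (hh0 : ∀ x, 0 ≤ h x)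
    (hh : Integrable h) (hC : ∀ x, ‖h x‖ ≤ C) (h1 : ∫ x, h x = 1)
    (hft : Integrable fun x => f x * f (x + t))
    (hsupp : ∀ y ∈ Function.support h,
      |f (y - t) + f (y + t) - (f (x₀ - t) + f (x₀ + t))| ≤ δ) (τ : ℝ) :
    autocorr f t + τ * (f (x₀ - t) + f (x₀ + t)) - |τ| * δ ≤
      autocorr (fun x => f x + τ * h x) t := by
  have hint : Integrable fun y => h y * (f (y - t) + f (y + t)) :=
    ((hf.comp_sub_right t).add (hf.comp_add_right t)).bdd_mul hh.aestronglyMeasurable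
      (ae_of_all _ hC)
  have hmean := abs_integral_mul_sub_le hh0 hh hint h1 hsupp
  have hcross : |τ * (∫ y, h y * (f (y - t) + f (y + t))) - τ * (f (x₀ - t) + f (x₀ + t))|
      ≤ |τ| * δ := by
    rw [← mul_sub, abs_mul]
    exact mul_le_mul_of_nonneg_left hmean (abs_nonneg τ)
  have hquad : 0 ≤ τ ^ 2 * autocorr h t := mul_nonneg (sq_nonneg τ) (autocorr_nonneg hh0 t)
  rw [autocorr_add_mul hf hh hC hft]
  linarith [(abs_le.1 hcross).1]

end autocorr

namespace IsAutocorrMaximizer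

variable {f : ℝ → ℝ} (hmax : IsAutocorrMaximizer f) (hI : 0 < ∫ x, f x)
include hmax hI

theorem mul_sq_le {g : ℝ → ℝ} (hg : Integrable g) (hg0 : ∀ x, 0 ≤ g x)
    (hgI : ∫ x, g x ≠ 0) {a : ℝ} (ha : ∀ t ∈ Icc (0 : ℝ) 1, a ≤ autocorr g t) :
    a * (∫ x, f x) ^ 2 ≤ minAutocorr f * (∫ x, g x) ^ 2 :=
  (div_le_div_iff₀ (by positivity) (by positivity)).1 <|
    (div_le_div_of_nonneg_right (le_minAutocorr ha) (sq_nonneg _)).trans (hmax g hg hg0)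

theorem minAutocorr_pos : 0 < minAutocorr f := by
  set g : ℝ → ℝ := (Icc (0 : ℝ) 2).indicator 1
  have hg0 : ∀ x, 0 ≤ g x := fun x => indicator_nonneg (fun _ _ => zero_le_one) x
  have hg1 : ∀ x, ‖g x‖ ≤ 1 := fun x => by
    rw [Real.norm_eq_abs, abs_of_nonneg (hg0 x)]
    exact indicator_le_self' (fun _ _ => zero_le_one) x
  have hg : Integrable g :=
    (integrable_indicator_iff measurableSet_Icc).2 (integrableOn_const measure_Icc_lt_top.ne)
  have hgI : ∫ x, g x = 2 := by
    rw [integral_indicator_one measurableSet_Icc, Real.volume_real_Icc_of_le zero_le_two]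
    norm_num
  have hlow : ∀ t ∈ Icc (0 : ℝ) 1, 1 ≤ autocorr g t := by
    rintro t ⟨ht0, ht1⟩
    have hpt : (Icc (0 : ℝ) 1).indicator 1 ≤ fun x => g x * g (x + t) := by
      intro x
      by_cases hx : x ∈ Icc (0 : ℝ) 1
      · have hxt : x + t ∈ Icc (0 : ℝ) 2 := ⟨by linarith [hx.1], by linarith [hx.2]⟩
        have hx2 : x ∈ Icc (0 : ℝ) 2 := ⟨hx.1, by linarith [hx.2]⟩
        simp [g, hx, hxt, hx2]
      · simp only [indicator_of_notMem hx]
        exact mul_nonneg (hg0 x) (hg0 _)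
    calc (1 : ℝ) = ∫ x, (Icc (0 : ℝ) 1).indicator 1 x := by
          rw [integral_indicator_one measurableSet_Icc, Real.volume_real_Icc_of_le zero_le_one]
          norm_num
      _ ≤ autocorr g t :=
          integral_mono ((integrable_indicator_iff measurableSet_Icc).2
            (integrableOn_const measure_Icc_lt_top.ne))
            ((hg.comp_add_right t).bdd_mul hg.aestronglyMeasurable (ae_of_all _ hg1)) hpt
  have := hmax.mul_sq_le hI hg hg0 (by rw [hgI]; norm_num) hlow
  nlinarith

theorem integrable_mul_comp_add (hf0 : ∀ x, 0 ≤ f x) {t : ℝ} (ht : t ∈ Icc (0 : ℝ) 1) :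
    Integrable fun x => f x * f (x + t) :=
  .of_integral_ne_zero ((hmax.minAutocorr_pos hI).trans_le (minAutocorr_le_autocorr hf0 ht)).ne'

theorem perturb_mul_sq_le {h : ℝ → ℝ} {C x₀ δ τ a : ℝ} (hf : Integrable f)
    (hf0 : ∀ x, 0 ≤ f x) (hh0 : ∀ x, 0 ≤ h x) (hh : Integrable h) (hC : ∀ x, ‖h x‖ ≤ C)
    (h1 : ∫ x, h x = 1)
    (hsupp : ∀ y ∈ Function.support h, ∀ t ∈ Icc (0 : ℝ) 1,
      |f (y - t) + f (y + t) - (f (x₀ - t) + f (x₀ + t))| ≤ δ)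
    (hg0 : ∀ x, 0 ≤ f x + τ * h x) (hτ : (∫ x, f x) + τ ≠ 0)
    (ha : ∀ t ∈ Icc (0 : ℝ) 1, a ≤ minAutocorr f + τ * (f (x₀ - t) + f (x₀ + t)) - |τ| * δ) :
    a * (∫ x, f x) ^ 2 ≤ minAutocorr f * ((∫ x, f x) + τ) ^ 2 := by
  have hgI : ∫ x, f x + τ * h x = (∫ x, f x) + τ := by
    rw [integral_add hf (hh.const_mul τ), integral_const_mul, h1, mul_one]
  rw [← hgI]
  refine hmax.mul_sq_le hI (hf.add (hh.const_mul τ)) hg0 (hgI ▸ hτ) fun t ht => ?_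
  calc a ≤ autocorr f t + τ * (f (x₀ - t) + f (x₀ + t)) - |τ| * δ := by
        linarith [ha t ht, minAutocorr_le_autocorr hf0 ht]
    _ ≤ autocorr (fun x => f x + τ * h x) t :=
        autocorr_add_mul_ge hf hh0 hh hC h1 (hmax.integrable_mul_comp_add hI hf0 ht)
          (fun y hy => hsupp y hy t ht) τ

theorem sInf_mul_integral_le (hcont : Continuous f) (hf : Integrable f) (hf0 : ∀ x, 0 ≤ f x)
    (x₁ : ℝ) :
    sInf ((fun t => f (x₁ - t) + f (x₁ + t)) '' Icc (0 : ℝ) 1) * (∫ x, f x) ≤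
      2 * minAutocorr f := by
  set I := ∫ x, f x
  set N := minAutocorr f
  set m := sInf ((fun t => f (x₁ - t) + f (x₁ + t)) '' Icc (0 : ℝ) 1)
  have hm : ∀ t ∈ Icc (0 : ℝ) 1, m ≤ f (x₁ - t) + f (x₁ + t) := fun t ht =>
    csInf_le ⟨0, forall_mem_image.2 fun s _ => add_nonneg (hf0 _) (hf0 _)⟩
      (mem_image_of_mem _ ht)
  suffices happrox : ∀ δ > 0, m * I ^ 2 ≤ 2 * N * I + δ * I ^ 2 by
    have := le_of_eventually_nhdsGT_le_add_mul (eventually_nhdsWithin_of_forall happrox)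
    nlinarith
  intro δ hδ
  obtain ⟨h, C, hh0, hC, hh, h1, hsupp⟩ :=
    exists_density_support_subset (μ := volume) (isCompact_Icc.eventually_forall_abs_sub_lt
      (F := fun y t => f (y - t) + f (y + t)) (by fun_prop) x₁ hδ)
  refine le_of_eventually_nhdsGT_le_add_mul (c := N)
    (eventually_nhdsWithin_of_forall fun τ (hτ : 0 < τ) => ?_)
  have key := hmax.perturb_mul_sq_le hI hf hf0 hh0 hh hC h1
    (fun y hy t ht => (hsupp hy t ht).le) (a := N + τ * (m - δ))
    (fun x => add_nonneg (hf0 x) (mul_nonneg hτ.le (hh0 x)))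
    (by positivity) fun t ht => by rw [abs_of_pos hτ]; nlinarith [hm t ht]
  nlinarith

theorem two_mul_minAutocorr_le_sSup_mul_integral (hcont : Continuous f) (hf : Integrable f)
    (hf0 : ∀ x, 0 ≤ f x) {x₂ : ℝ} (hx₂ : x₂ ∈ tsupport f) :
    2 * minAutocorr f ≤
      sSup ((fun t => f (x₂ - t) + f (x₂ + t)) '' Icc (0 : ℝ) 1) * (∫ x, f x) := by
  set I := ∫ x, f x
  set N := minAutocorr f
  set M := sSup ((fun t => f (x₂ - t) + f (x₂ + t)) '' Icc (0 : ℝ) 1)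
  have hM : ∀ t ∈ Icc (0 : ℝ) 1, f (x₂ - t) + f (x₂ + t) ≤ M := fun t ht =>
    le_csSup (isCompact_Icc.bddAbove_image (by fun_prop)) (mem_image_of_mem _ ht)
  suffices happrox : ∀ δ > 0, 2 * N * I ≤ M * I ^ 2 + δ * I ^ 2 by
    have := le_of_eventually_nhdsGT_le_add_mul (eventually_nhdsWithin_of_forall happrox)
    nlinarith
  intro δ hδ
  -- Mass can only be removed where `f` is positive, so the density sits near a point `x'` of
  -- the support that is close to `x₂`.
  obtain ⟨x', hx'good, hfx'⟩ := mem_closure_iff_nhds.1 hx₂ _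
    (isCompact_Icc.eventually_forall_abs_sub_lt
      (F := fun y t => f (y - t) + f (y + t)) (by fun_prop) x₂ hδ).eventually_nhds
  have hfx'pos : 0 < f x' := (hf0 x').lt_of_ne' hfx'
  obtain ⟨h, C, hh0, hC, hh, h1, hsupp⟩ := exists_density_support_subset (μ := volume)
    (hx'good.and (hcont.continuousAt.eventually (lt_mem_nhds (half_lt_self hfx'pos))))
  have hC1 : 0 < C + 1 := by linarith [(norm_nonneg _).trans (hC 0)]
  refine le_of_eventually_nhdsGT_le_add_mul (c := N) ?_
  filter_upwards [Ioo_mem_nhdsGT (lt_min hI (div_pos (half_pos hfx'pos) hC1))]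
    with τ ⟨hτ0, hτ⟩
  have hg0 : ∀ x, 0 ≤ f x + -τ * h x := by
    intro x
    by_cases hx : h x = 0
    · simp [hx, hf0 x]
    · have hfx : f x' / 2 < f x := (hsupp hx).2
      have hτC : τ * (C + 1) < f x' / 2 :=
        (lt_div_iff₀ hC1).1 (hτ.trans_le (min_le_right _ _))
      have hhx : h x ≤ C := (le_abs_self _).trans (hC x)
      nlinarith
  have key := hmax.perturb_mul_sq_le hI hf hf0 hh0 hh hC h1
    (fun y hy t ht => ((hsupp hy).1 t ht).le) (a := N - τ * (M + δ)) hg0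
    (by linarith [hτ.trans_le (min_le_left _ _)])
    fun t ht => by rw [abs_neg, abs_of_pos hτ0]; nlinarith [hM t ht]
  nlinarith

end IsAutocorrMaximizer

theorem maximizer_maximin_le_minimax (f : ℝ → ℝ)
    (hcont : Continuous f) (hf : Integrable f) (hpos : ∀ x, 0 ≤ f x)
    (hnorm : 0 < ∫ x, f x)
    (hmax : ∀ g : ℝ → ℝ, Integrable g → (∀ x, 0 ≤ g x) →
      sInf ((fun t => ∫ x, g x * g (x + t)) '' Icc (0:ℝ) 1) / (∫ x, g x)^2
        ≤ sInf ((fun t => ∫ x, f x * f (x + t)) '' Icc (0:ℝ) 1) / (∫ x, f x)^2) :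
    sSup (Set.range (fun x₁ => sInf ((fun t => f (x₁ - t) + f (x₁ + t)) '' Icc (0:ℝ) 1)))
      ≤ sInf ((fun x₂ => sSup ((fun t => f (x₂ - t) + f (x₂ + t)) '' Icc (0:ℝ) 1)) ''
          tsupport f) := by
  replace hmax : IsAutocorrMaximizer f := hmax
  have hsupp : (tsupport f).Nonempty :=
    (Function.support_nonempty_iff.2 fun h => by simp [h] at hnorm).mono (subset_tsupport f)
  calc _ ≤ 2 * minAutocorr f / ∫ x, f x :=
        csSup_le (range_nonempty _) <| forall_mem_range.2 fun x₁ =>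
          (le_div_iff₀ hnorm).2 (hmax.sInf_mul_integral_le hnorm hcont hf hpos x₁)
    _ ≤ _ :=
        le_csInf (hsupp.image _) <| forall_mem_image.2 fun x₂ hx₂ =>
          (div_le_iff₀ hnorm).2
            (hmax.two_mul_minAutocorr_le_sSup_mul_integral hnorm hcont hf hpos hx₂)
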